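/- Let n, k ≥ 1, let s > 0, and let ξ₁, …, ξ_{n+k} > 0. Let M' be a real (n+k)×(n+k) upper triangular matrix with strictly positive diagonal entries, set W' = (M')ᵀM', let N be the leading principal n×n submatrix of M', and set W = NᵀN. Let Ξ' be the diagonal (n+k)×(n+k) matrix with diagonal entries ξ₁², …, ξ_{n+k}², and let Ξ be the diagonal n×n matrix with diagonal entries ξ₁², …, ξₙ². Let μ' ∈ ℝ^{n+k}, let μ ∈ ℝⁿ consist of the first n coordinates of μ', let z' = ((M')ᵀ)⁻¹μ', and let g ∈ ℝᵏ consist of the last k coordinates of z'. Define B = [exp((1/2)(μ')ᵀ(W')⁻¹μ')/√(det(s²W'Ξ'))] / [exp((1/2)μᵀW⁻¹μ)/√(det(s²WΞ))]. Then 2 log B = ‖g‖² − 2 ∑_{i=n+1}^{n+k} log(s ξᵢ M'_{i,i}). -/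

import Mathlib

/-!
Writing `M'ᵀ z' = μ'`, the quadratic form `μ'ᵀ (M'ᵀ M')⁻¹ μ'` is `‖z'‖²`, and since `M'` is upper
triangular the first `n` coordinates of `z'` solve the analogous system `Nᵀ z = μ` for the leading
block. Both determinants are squares of products of the diagonal entries `s ξᵢ M'ᵢᵢ`. Hence in
`2 log B` the contributions of the first `n` indices cancel, leaving the last `k` coordinates of
`z'` and the last `k` diagonal factors.
-/

open Matrix

namespace Matrix

section

variable {ι R : Type*} [Fintype ι] [DecidableEq ι] [CommRing R]

theorem dotProduct_inv_transpose_mul_self_mulVec (A : Matrix ι ι R) (μ : ι → R) :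
    μ ⬝ᵥ ((Aᵀ * A)⁻¹ *ᵥ μ) = (Aᵀ⁻¹ *ᵥ μ) ⬝ᵥ (Aᵀ⁻¹ *ᵥ μ) := by
  rw [mul_inv_rev, ← mulVec_mulVec, dotProduct_mulVec, ← mulVec_transpose,
    transpose_nonsing_inv]

theorem IsUpperTriangular.det_smul_transpose_mul_self_mul_diagonal [LinearOrder ι]
    {A : Matrix ι ι R} (hA : A.IsUpperTriangular) (s : R) (d : ι → R) :
    (s ^ 2 • (Aᵀ * A * diagonal fun i => d i ^ 2)).det = (∏ i, s * d i * A i i) ^ 2 := by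
  simp only [det_smul, det_mul, det_transpose, det_diagonal, det_of_isUpperTriangular hA,
    Fintype.card, mul_pow, Finset.prod_mul_distrib, Finset.prod_pow, Finset.prod_const]
  ring

end

theorem IsUpperTriangular.isUnit_det {ι K : Type*} [Fintype ι] [LinearOrder ι] [Field K]
    {A : Matrix ι ι K} (hA : A.IsUpperTriangular) (hdiag : ∀ i, A i i ≠ 0) : IsUnit A.det := by
  rw [det_of_isUpperTriangular hA]
  exact (Finset.prod_ne_zero_iff.mpr fun i _ => hdiag i).isUnit

theorem IsUpperTriangular.submatrix_castAdd_transpose_mulVec {n k : ℕ} {R : Type*} [CommRing R]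
    {M : Matrix (Fin (n + k)) (Fin (n + k)) R} (hM : M.IsUpperTriangular) (v : Fin (n + k) → R) :
    (M.submatrix (Fin.castAdd k) (Fin.castAdd k))ᵀ *ᵥ (fun i => v (Fin.castAdd k i)) =
      fun i => (Mᵀ *ᵥ v) (Fin.castAdd k i) := by
  funext i
  have hlower : ∀ j : Fin k, M (Fin.natAdd n j) (Fin.castAdd k i) = 0 := fun j =>
    hM (by simp [Fin.lt_def]; omega)
  simp [mulVec, dotProduct, Fin.sum_univ_add, hlower]

theorem IsUpperTriangular.submatrix_castAdd {n k : ℕ} {R : Type*} [Zero R]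
    {M : Matrix (Fin (n + k)) (Fin (n + k)) R} (hM : M.IsUpperTriangular) :
    (M.submatrix (Fin.castAdd k) (Fin.castAdd k)).IsUpperTriangular :=
  fun _ _ h => hM h

theorem IsUpperTriangular.inv_transpose_submatrix_castAdd_mulVec {n k : ℕ} {K : Type*} [Field K]
    {M : Matrix (Fin (n + k)) (Fin (n + k)) K} (hM : M.IsUpperTriangular)
    (hdiag : ∀ i, M i i ≠ 0) (μ : Fin (n + k) → K) :
    (M.submatrix (Fin.castAdd k) (Fin.castAdd k))ᵀ⁻¹ *ᵥ (fun i => μ (Fin.castAdd k i)) =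
      fun i => (Mᵀ⁻¹ *ᵥ μ) (Fin.castAdd k i) := by
  have hN : IsUnit (M.submatrix (Fin.castAdd k) (Fin.castAdd k))ᵀ.det := by
    rw [det_transpose]
    exact hM.submatrix_castAdd.isUnit_det fun i => hdiag _
  have hMT : IsUnit Mᵀ.det := by
    rw [det_transpose]
    exact hM.isUnit_det hdiag
  have hμ : μ = Mᵀ *ᵥ (Mᵀ⁻¹ *ᵥ μ) := by
    rw [mulVec_mulVec, mul_nonsing_inv _ hMT, one_mulVec]
  conv_lhs => rw [hμ, ← hM.submatrix_castAdd_transpose_mulVec, mulVec_mulVec,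
    nonsing_inv_mul _ hN, one_mulVec]

end Matrix

/-- The paper's `P = exp (μᵀ W⁻¹ μ / 2) / √det (s² W Ξ)` for the model with `W = Mᵀ M`. -/
noncomputable def marginalLikelihood {ι : Type*} [Fintype ι] [DecidableEq ι]
    (s : ℝ) (ξ : ι → ℝ) (M : Matrix ι ι ℝ) (μ : ι → ℝ) : ℝ :=
  Real.exp ((1 / 2) * (μ ⬝ᵥ ((Mᵀ * M)⁻¹ *ᵥ μ))) /
    Real.sqrt ((s ^ 2 • (Mᵀ * M * diagonal fun i => ξ i ^ 2)).det)

section marginalLikelihood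

variable {ι : Type*} [Fintype ι] [DecidableEq ι] [LinearOrder ι] {s : ℝ} {ξ : ι → ℝ}
  {M : Matrix ι ι ℝ}

theorem marginalLikelihood_eq_of_isUpperTriangular (hM : M.IsUpperTriangular) (μ : ι → ℝ) :
    marginalLikelihood s ξ M μ =
      Real.exp ((1 / 2) * ((Mᵀ⁻¹ *ᵥ μ) ⬝ᵥ (Mᵀ⁻¹ *ᵥ μ))) / |∏ i, s * ξ i * M i i| := by
  rw [marginalLikelihood, dotProduct_inv_transpose_mul_self_mulVec,
    hM.det_smul_transpose_mul_self_mul_diagonal, Real.sqrt_sq_eq_abs]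

theorem marginalLikelihood_ne_zero (hM : M.IsUpperTriangular) (hs : s ≠ 0) (hξ : ∀ i, ξ i ≠ 0)
    (hdiag : ∀ i, M i i ≠ 0) (μ : ι → ℝ) : marginalLikelihood s ξ M μ ≠ 0 := by
  rw [marginalLikelihood_eq_of_isUpperTriangular hM]
  exact div_ne_zero (Real.exp_ne_zero _) <| abs_ne_zero.mpr <|
    Finset.prod_ne_zero_iff.mpr fun i _ => mul_ne_zero (mul_ne_zero hs (hξ i)) (hdiag i)

theorem two_mul_log_marginalLikelihood (hM : M.IsUpperTriangular) (hs : s ≠ 0)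
    (hξ : ∀ i, ξ i ≠ 0) (hdiag : ∀ i, M i i ≠ 0) (μ : ι → ℝ) :
    2 * Real.log (marginalLikelihood s ξ M μ) =
      (Mᵀ⁻¹ *ᵥ μ) ⬝ᵥ (Mᵀ⁻¹ *ᵥ μ) - 2 * ∑ i, Real.log (s * ξ i * M i i) := by
  have hfactor : ∀ i, s * ξ i * M i i ≠ 0 := fun i => mul_ne_zero (mul_ne_zero hs (hξ i)) (hdiag i)
  rw [marginalLikelihood_eq_of_isUpperTriangular hM, Real.log_div (Real.exp_ne_zero _)
      (abs_ne_zero.mpr (Finset.prod_ne_zero_iff.mpr fun i _ => hfactor i)), Real.log_exp,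
    Real.log_abs, Real.log_prod fun i _ => hfactor i]
  ring

end marginalLikelihood

theorem stmt9_general (n k : ℕ)
    (s : ℝ) (hs : 0 < s) (ξ : Fin (n + k) → ℝ) (hξ : ∀ i, 0 < ξ i)
    (M' : Matrix (Fin (n + k)) (Fin (n + k)) ℝ)
    (hMtri : ∀ i i' : Fin (n + k), i' < i → M' i i' = 0)
    (hMdiag : ∀ i, 0 < M' i i)
    (μ' : Fin (n + k) → ℝ) :
    let W' := M'ᵀ * M'
    let N := M'.submatrix (Fin.castAdd k) (Fin.castAdd k)
    let W := Nᵀ * N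
    let Ξ' := Matrix.diagonal fun i => ξ i ^ 2
    let Ξ := Matrix.diagonal fun i : Fin n => ξ (Fin.castAdd k i) ^ 2
    let μ : Fin n → ℝ := fun i => μ' (Fin.castAdd k i)
    let z' := (M'ᵀ)⁻¹ *ᵥ μ'
    let g : EuclideanSpace ℝ (Fin k) := WithLp.toLp 2 (fun i => z' (Fin.natAdd n i))
    let B := (Real.exp ((1 / 2) * (μ' ⬝ᵥ (W'⁻¹ *ᵥ μ'))) /
        Real.sqrt ((s ^ 2 • (W' * Ξ')).det)) /
      (Real.exp ((1 / 2) * (μ ⬝ᵥ (W⁻¹ *ᵥ μ))) /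
        Real.sqrt ((s ^ 2 • (W * Ξ)).det))
    2 * Real.log B =
      ‖g‖ ^ 2 - 2 * ∑ i : Fin k,
        Real.log (s * ξ (Fin.natAdd n i) * M' (Fin.natAdd n i) (Fin.natAdd n i)) := by
  intro W' N W Ξ' Ξ μ z' g B
  have hM : M'.IsUpperTriangular := fun i i' h => hMtri i i' h
  have hN : N.IsUpperTriangular := hM.submatrix_castAdd
  have hdiag : ∀ i, M' i i ≠ 0 := fun i => (hMdiag i).ne'
  have hξ₀ : ∀ i, ξ i ≠ 0 := fun i => (hξ i).ne'
  have hz : Nᵀ⁻¹ *ᵥ μ = fun i => z' (Fin.castAdd k i) :=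
    hM.inv_transpose_submatrix_castAdd_mulVec hdiag μ'
  have hg : ‖g‖ ^ 2 = ∑ i : Fin k, z' (Fin.natAdd n i) * z' (Fin.natAdd n i) := by
    rw [EuclideanSpace.norm_sq_eq]
    simp only [g, Real.norm_eq_abs, sq, abs_mul_abs_self]
  have hB : B = marginalLikelihood s ξ M' μ' /
      marginalLikelihood s (fun i => ξ (Fin.castAdd k i)) N μ := rfl
  rw [hB, Real.log_div (marginalLikelihood_ne_zero hM hs.ne' hξ₀ hdiag μ')
      (marginalLikelihood_ne_zero hN hs.ne' (fun _ => hξ₀ _) (fun _ => hdiag _) μ), mul_sub,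
    two_mul_log_marginalLikelihood hM hs.ne' hξ₀ hdiag μ',
    two_mul_log_marginalLikelihood hN hs.ne' (fun _ => hξ₀ _) (fun _ => hdiag _) μ, hz, hg]
  simp only [dotProduct, Fin.sum_univ_add, z', N, submatrix_apply]
  ring

theorem stmt9 (n k : ℕ) (hn : 1 ≤ n) (hk : 1 ≤ k)
    (s : ℝ) (hs : 0 < s) (ξ : Fin (n + k) → ℝ) (hξ : ∀ i, 0 < ξ i)
    (M' : Matrix (Fin (n + k)) (Fin (n + k)) ℝ)
    (hMtri : ∀ i i' : Fin (n + k), i' < i → M' i i' = 0)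
    (hMdiag : ∀ i, 0 < M' i i)
    (μ' : Fin (n + k) → ℝ) :
    let W' := M'ᵀ * M'
    let N := M'.submatrix (Fin.castAdd k) (Fin.castAdd k)
    let W := Nᵀ * N
    let Ξ' := Matrix.diagonal fun i => ξ i ^ 2
    let Ξ := Matrix.diagonal fun i : Fin n => ξ (Fin.castAdd k i) ^ 2
    let μ : Fin n → ℝ := fun i => μ' (Fin.castAdd k i)
    let z' := (M'ᵀ)⁻¹ *ᵥ μ'
    let g : EuclideanSpace ℝ (Fin k) := WithLp.toLp 2 (fun i => z' (Fin.natAdd n i))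
    let B := (Real.exp ((1 / 2) * (μ' ⬝ᵥ (W'⁻¹ *ᵥ μ'))) /
        Real.sqrt ((s ^ 2 • (W' * Ξ')).det)) /
      (Real.exp ((1 / 2) * (μ ⬝ᵥ (W⁻¹ *ᵥ μ))) /
        Real.sqrt ((s ^ 2 • (W * Ξ)).det))
    2 * Real.log B =
      ‖g‖ ^ 2 - 2 * ∑ i : Fin k,
        Real.log (s * ξ (Fin.natAdd n i) * M' (Fin.natAdd n i) (Fin.natAdd n i)) :=
  stmt9_general n k s hs ξ hξ M' hMtri hMdiag μ'
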